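/- Let Φ = (G, 𝕋, φ) be a complex unit gain graph with a perfect matching whose underlying graph G is connected, and let Φ ⊗ K₂ be its bipartite double. If 𝓔(Φ) = 2μ(G) then G ⊗ K₂ is disconnected; moreover G ⊗ K₂ has exactly two connected components, both isomorphic to G, and G is a complete bipartite graph. -/

import Mathlib

open Matrix

variable {V : Type*}

/-- A gain function on `G` with values in the circle group `𝕋 ⊆ ℂ`:
each ordered pair of adjacent vertices gets a unit complex number, and
reversing the pair inverts the gain. -/
structure IsGain (G : SimpleGraph V) (φ : V → V → ℂ) : Prop where
  unit : ∀ u v, G.Adj u v → ‖φ u v‖ = 1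
  inv : ∀ u v, G.Adj u v → φ v u = (φ u v)⁻¹

/-- The adjacency matrix of the complex unit gain graph `(G, 𝕋, φ)`. -/
noncomputable def gainAdj (G : SimpleGraph V) (φ : V → V → ℂ) : Matrix V V ℂ :=
  fun u v => @ite _ (G.Adj u v) (Classical.dec _) (φ u v) 0

theorem IsGain.isHermitian {G : SimpleGraph V} {φ : V → V → ℂ} (hg : IsGain G φ) :
    (gainAdj G φ).IsHermitian := by
  ext u v
  simp only [conjTranspose_apply, gainAdj]
  by_cases h : G.Adj u v
  · rw [if_pos h.symm, if_pos h, hg.inv u v h, Complex.inv_eq_conj (hg.unit u v h)]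
    simp
  · rw [if_neg (fun h' => h h'.symm), if_neg h]
    simp

/-- The energy of a complex unit gain graph: the sum of the absolute values of the
eigenvalues of its (Hermitian) adjacency matrix. -/
noncomputable def gainEnergy [Fintype V] [DecidableEq V] (G : SimpleGraph V) (φ : V → V → ℂ)
    (hg : IsGain G φ) : ℝ :=
  ∑ i, |hg.isHermitian.eigenvalues i|

/-- `M` is a matching of `G`: a set of edges of `G`, pairwise sharing no vertex. -/
def IsGraphMatching (G : SimpleGraph V) (M : Finset (Sym2 V)) : Prop :=
  (↑M : Set (Sym2 V)) ⊆ G.edgeSet ∧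
    ∀ e ∈ M, ∀ f ∈ M, e ≠ f → ∀ v : V, v ∈ e → v ∉ f

/-- The matching number of `G`: the largest size of a matching. -/
noncomputable def matchingNumber (G : SimpleGraph V) : ℕ :=
  sSup {n | ∃ M : Finset (Sym2 V), IsGraphMatching G M ∧ M.card = n}

/-- The gain of a walk: the product of the gains along its darts. -/
def walkGain {G : SimpleGraph V} (φ : V → V → ℂ) {u v : V} (w : G.Walk u v) : ℂ :=
  (w.darts.map fun d => φ d.toProd.1 d.toProd.2).prod

/-- A complex unit gain graph is balanced if every cycle has gain `1`. -/
def IsBalanced (G : SimpleGraph V) (φ : V → V → ℂ) : Prop :=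
  ∀ (v : V) (w : G.Walk v v), w.IsCycle → walkGain φ w = 1

theorem IsGain.anti {G H : SimpleGraph V} {φ : V → V → ℂ} (hg : IsGain G φ) (hle : H ≤ G) :
    IsGain H φ :=
  ⟨fun u v h => hg.unit u v (hle h), fun u v h => hg.inv u v (hle h)⟩

theorem IsGain.induce {G : SimpleGraph V} {φ : V → V → ℂ} (hg : IsGain G φ) (s : Set V) :
    IsGain (G.induce s) (fun a b => φ a b) :=
  ⟨fun u v h => hg.unit u v h, fun u v h => hg.inv u v h⟩

/-- The bipartite double `G ⊗ K₂` of a graph `G`: vertices `V × Bool`, with `(v, s)` adjacent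
to `(v', s')` exactly when `v` is adjacent to `v'` in `G` and `s ≠ s'`. -/
def bipartiteDouble (G : SimpleGraph V) : SimpleGraph (V × Bool) where
  Adj p q := G.Adj p.1 q.1 ∧ p.2 ≠ q.2
  symm := ⟨fun _ _ h => ⟨h.1.symm, h.2.symm⟩⟩
  loopless := ⟨fun _ h => h.2 rfl⟩

/-!
Let `m` be the involution pairing the vertices along the perfect matching and `B` the gain
matrix of that matching: a Hermitian unitary with `tr (A B) = n = 2 μ(G)`. The hypothesis
`𝓔(Φ) = ∑ |λᵢ| = n` says that `B` attains the trace norm of `A`, which forces `B A = |A|`,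
so `C = B A` is positive semidefinite. Its diagonal is `1`, its nonzero entries are
unimodular, and `C u v ≠ 0 ↔ m u ~ v`. For such a matrix, indices joined by a nonzero entry
have parallel Gram vectors, so the support of `C` is an equivalence relation. In a connected
graph this forces `G` to be complete bipartite with parts `N(m u₀)` and `N(u₀)`, and the
bipartite double of a bipartite graph is two disjoint copies of it.
-/

open scoped ComplexOrder

namespace IsGain

variable {G : SimpleGraph V} {φ : V → V → ℂ}

theorem ne_zero (hg : IsGain G φ) {u v : V} (h : G.Adj u v) : φ u v ≠ 0 :=
  norm_ne_zero_iff.mp (by rw [hg.unit u v h]; exact one_ne_zero)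

theorem mul_eq_one (hg : IsGain G φ) {u v : V} (h : G.Adj u v) : φ u v * φ v u = 1 := by
  rw [hg.inv u v h, mul_inv_cancel₀ (hg.ne_zero h)]

theorem star_eq (hg : IsGain G φ) {u v : V} (h : G.Adj u v) : star (φ u v) = φ v u := by
  rw [hg.inv u v h, Complex.inv_eq_conj (hg.unit u v h)]
  rfl

end IsGain

namespace IsGraphMatching

variable {G : SimpleGraph V} {M : Finset (Sym2 V)}

theorem eq_of_mem (hM : IsGraphMatching G M) {v : V} {e f : Sym2 V} (he : e ∈ M) (hf : f ∈ M)
    (hve : v ∈ e) (hvf : v ∈ f) : e = f :=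
  by_contra fun hne => hM.2 e he f hf hne v hve hvf

theorem two_mul_card [DecidableEq V] (hM : IsGraphMatching G M) :
    2 * M.card = (M.biUnion Sym2.toFinset).card := by
  rw [Finset.card_biUnion fun e he f hf hne => Finset.disjoint_left.mpr fun v hve hvf =>
    hM.2 e he f hf hne v (Sym2.mem_toFinset.mp hve) (Sym2.mem_toFinset.mp hvf)]
  rw [Finset.sum_congr rfl fun e he =>
    Sym2.card_toFinset_of_not_isDiag e (G.not_isDiag_of_mem_edgeSet (hM.1 he))]
  simp [mul_comm]

theorem two_mul_card_le [Fintype V] [DecidableEq V] (hM : IsGraphMatching G M) :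
    2 * M.card ≤ Fintype.card V :=
  hM.two_mul_card ▸ Finset.card_le_univ _

theorem two_mul_card_eq [Fintype V] [DecidableEq V] (hM : IsGraphMatching G M)
    (hcov : ∀ v : V, ∃ e ∈ M, v ∈ e) : 2 * M.card = Fintype.card V := by
  have hcover : M.biUnion Sym2.toFinset = Finset.univ := Finset.eq_univ_of_forall fun v => by
    obtain ⟨e, he, hve⟩ := hcov v
    exact Finset.mem_biUnion.mpr ⟨e, he, Sym2.mem_toFinset.mpr hve⟩
  rw [hM.two_mul_card, hcover, Finset.card_univ]

theorem matchingNumber_eq [Fintype V] [DecidableEq V] (hM : IsGraphMatching G M)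
    (hcov : ∀ v : V, ∃ e ∈ M, v ∈ e) : matchingNumber G = M.card := by
  refine IsGreatest.csSup_eq ⟨⟨M, hM, rfl⟩, ?_⟩
  rintro _ ⟨M', hM', rfl⟩
  have := hM'.two_mul_card_le
  have := hM.two_mul_card_eq hcov
  omega

theorem exists_involutive [DecidableEq V] (hM : IsGraphMatching G M)
    (hcov : ∀ v : V, ∃ e ∈ M, v ∈ e) :
    ∃ m : V → V, Function.Involutive m ∧ ∀ v, G.Adj v (m v) := by
  choose e he hve using hcov
  have hspec (v : V) : s(v, Sym2.Mem.other' (hve v)) = e v := Sym2.other_spec' (hve v)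
  refine ⟨fun v => Sym2.Mem.other' (hve v), fun v => ?_, fun v => ?_⟩
  · have hw := Sym2.other_mem' (hve v)
    rw [← Sym2.congr_right, hspec, hM.eq_of_mem (he _) (he v) (hve _) hw, ← hspec v, Sym2.eq_swap]
  · have := hM.1 (he v)
    rwa [← hspec v, SimpleGraph.mem_edgeSet] at this

end IsGraphMatching

theorem RCLike.eq_of_norm_le_of_sum_eq {𝕜 ι : Type*} [RCLike 𝕜] {s : Finset ι} {z : ι → 𝕜}
    {r : ι → ℝ} (hle : ∀ i ∈ s, ‖z i‖ ≤ r i) (hsum : ∑ i ∈ s, z i = ∑ i ∈ s, (r i : 𝕜)) :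
    ∀ i ∈ s, z i = r i := by
  have hre : ∑ i ∈ s, RCLike.re (z i) = ∑ i ∈ s, r i := by
    simpa only [map_sum, RCLike.ofReal_re] using congrArg RCLike.re hsum
  intro i hi
  have hri : RCLike.re (z i) = r i := (Finset.sum_eq_sum_iff_of_le fun j hj =>
    (RCLike.re_le_norm (z j)).trans (hle j hj)).mp hre i hi
  rw [← hri, RCLike.re_eq_self_of_le (hri ▸ hle i hi)]

namespace Matrix

variable {𝕜 n : Type*} [RCLike 𝕜] [Fintype n] [DecidableEq n]

theorem sum_norm_sq_apply_of_mem_unitaryGroup {D : Matrix n n 𝕜} (hD : D ∈ unitaryGroup n 𝕜)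
    (j : n) : ∑ k, ‖D k j‖ ^ 2 = 1 := by
  have h : (star D * D) j j = 1 := by rw [mem_unitaryGroup_iff'.mp hD, one_apply_eq]
  simp only [mul_apply, star_apply, ← starRingEnd_apply, RCLike.conj_mul] at h
  exact_mod_cast h

theorem apply_eq_zero_of_norm_diag_eq_one {D : Matrix n n 𝕜} (hD : D ∈ unitaryGroup n 𝕜)
    {j : n} (hj : ‖D j j‖ = 1) {k : n} (hk : k ≠ j) : D k j = 0 := by
  have hrest : ∑ k ∈ Finset.univ.erase j, ‖D k j‖ ^ 2 = 0 := by
    have := sum_norm_sq_apply_of_mem_unitaryGroup hD j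
    rw [← Finset.add_sum_erase _ _ (Finset.mem_univ j), hj] at this
    linarith
  have := (Finset.sum_eq_zero_iff_of_nonneg fun k _ => sq_nonneg ‖D k j‖).mp hrest k
    (Finset.mem_erase.mpr ⟨hk, Finset.mem_univ k⟩)
  simpa using this

/-- Equality case of `|∑ dᵢ Dᵢᵢ| ≤ ∑ |dᵢ|` for a unitary `D`. -/
theorem mul_diagonal_eq_diagonal_abs {D : Matrix n n 𝕜} (hD : D ∈ unitaryGroup n 𝕜) {d : n → ℝ}
    (h : ∑ i, (d i : 𝕜) * D i i = ∑ i, ((|d i| : ℝ) : 𝕜)) :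
    D * diagonal (fun i => (d i : 𝕜)) = diagonal (fun i => ((|d i| : ℝ) : 𝕜)) := by
  have hle (i : n) : ‖(d i : 𝕜) * D i i‖ ≤ |d i| := by
    rw [norm_mul, RCLike.norm_ofReal]
    exact mul_le_of_le_one_right (abs_nonneg _) (entry_norm_bound_of_unitary hD i i)
  have heq := RCLike.eq_of_norm_le_of_sum_eq (fun i _ => hle i) h
  ext k j
  rw [mul_diagonal, diagonal_apply]
  split_ifs with hkj
  · rw [hkj, mul_comm]
    exact heq j (Finset.mem_univ j)
  · by_cases hdj : d j = 0
    · simp [hdj]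
    have hnorm : ‖D j j‖ = 1 := by
      have := congrArg norm (heq j (Finset.mem_univ j))
      rw [norm_mul, RCLike.norm_ofReal, RCLike.norm_ofReal, abs_abs] at this
      exact mul_left_cancel₀ (abs_ne_zero.mpr hdj) (this.trans (mul_one _).symm)
    rw [apply_eq_zero_of_norm_diag_eq_one hD hnorm hkj, zero_mul]

/-- Equality case of `Re tr (A B) ≤ ∑ |λᵢ(A)|` for a unitary `B`: it forces `B A = |A|`. -/
theorem IsHermitian.posSemidef_mul_of_trace_mul_eq {A B : Matrix n n 𝕜} (hA : A.IsHermitian)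
    (hB : B ∈ unitaryGroup n 𝕜)
    (htr : (A * B).trace = ∑ i, ((|hA.eigenvalues i| : ℝ) : 𝕜)) : (B * A).PosSemidef := by
  set U : Matrix n n 𝕜 := ↑hA.eigenvectorUnitary
  set Λ : Matrix n n 𝕜 := diagonal (fun i => (hA.eigenvalues i : 𝕜))
  have hUU : U * star U = 1 := mem_unitaryGroup_iff.mp hA.eigenvectorUnitary.2
  have hA' : A = U * Λ * star U := by
    simpa [U, Λ, Function.comp_def] using hA.spectral_theorem
  set D : Matrix n n 𝕜 := star U * B * U
  have hD : D ∈ unitaryGroup n 𝕜 :=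
    mul_mem (mul_mem (Unitary.star_mem hA.eigenvectorUnitary.2) hB) hA.eigenvectorUnitary.2
  have htrD : (A * B).trace = ∑ i, (hA.eigenvalues i : 𝕜) * D i i := by
    conv_lhs => rw [hA', mul_assoc, trace_mul_comm, ← mul_assoc]
    simp [trace, mul_diagonal, Λ, D, mul_comm]
  have hBA : B * A = U * diagonal (fun i => ((|hA.eigenvalues i| : ℝ) : 𝕜)) * star U := by
    rw [← mul_diagonal_eq_diagonal_abs hD (htrD.symm.trans htr)]
    conv_lhs => rw [hA']
    simp only [D, Λ, ← mul_assoc, hUU, one_mul]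
  rw [hBA, star_eq_conjTranspose]
  exact (posSemidef_diagonal_iff.mpr fun i => by simp).mul_mul_conjTranspose_same U

/-- The quadratic form of `C` vanishes at `x = e_b - C a b • e_a`, hence so does `C x`. -/
theorem PosSemidef.apply_eq_mul_of_norm_eq_one {C : Matrix n n 𝕜} (hC : C.PosSemidef) {a b : n}
    (ha : C a a = 1) (hb : C b b = 1) (hab : ‖C a b‖ = 1) (c : n) : C c b = C a b * C c a := by
  set x : n → 𝕜 := Pi.single b 1 - C a b • Pi.single a 1
  have hba : C b a = star (C a b) := (hC.isHermitian.apply b a).symm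
  have hq : star x ⬝ᵥ C *ᵥ x = 0 := by
    have hn : star (C a b) * C a b = 1 := by
      rw [← starRingEnd_apply, RCLike.conj_mul, hab]; simp
    simp only [x, star_sub, star_smul, mulVec_sub, mulVec_smul, dotProduct_sub, sub_dotProduct,
      dotProduct_smul, smul_dotProduct, mulVec_single_one, ← Pi.single_star, star_one,
      single_dotProduct, col_apply, ha, hb, hba, smul_eq_mul, one_mul]
    linear_combination -hn
  have := congrFun ((hC.dotProduct_mulVec_zero_iff x).mp hq) c
  simp only [x, mulVec_sub, mulVec_smul, mulVec_single_one, Pi.sub_apply, Pi.smul_apply,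
    col_apply, smul_eq_mul, Pi.zero_apply] at this
  exact sub_eq_zero.mp this

theorem PosSemidef.equivalence_ne_zero {C : Matrix n n 𝕜} (hC : C.PosSemidef)
    (hdiag : ∀ i, C i i = 1) (hnorm : ∀ i j, C i j ≠ 0 → ‖C i j‖ = 1) :
    Equivalence fun i j => C i j ≠ 0 where
  refl i := by simp [hdiag]
  symm {i j} h := by
    rw [← hC.isHermitian.apply]
    simpa using h
  trans {i j k} hij hjk := by
    rw [hC.apply_eq_mul_of_norm_eq_one (hdiag j) (hdiag k) (hnorm j k hjk) i]
    exact mul_ne_zero hjk hij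

end Matrix

namespace SimpleGraph

variable {G : SimpleGraph V}

/-- The two parts are `N(m u₀)` and `N(u₀)`, for any vertex `u₀`. -/
theorem Connected.exists_adj_iff_ne {m : V → V} (hconn : G.Connected)
    (hm : Function.Involutive m) (hr : Equivalence fun u v => G.Adj (m u) v) :
    ∃ c : V → Bool, ∀ u v, G.Adj u v ↔ c u ≠ c v := by
  classical
  have hswap {a b : V} (h : G.Adj (m a) b) : G.Adj (m (m a)) (m b) := by
    rw [hm a]
    exact (hr.symm h).symm
  have hadj {a b : V} : G.Adj a b ↔ G.Adj (m (m a)) b := by rw [hm a]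
  obtain ⟨u₀⟩ := hconn.nonempty
  have hcover (v : V) : G.Adj (m u₀) v ∨ G.Adj (m (m u₀)) v := by
    induction (reachable_iff_reflTransGen _ _).mp (hconn.preconnected u₀ v) with
    | refl => exact Or.inl (hr.refl u₀)
    | tail _ hab ih =>
      rcases ih with h | h
      · exact Or.inr (hr.trans (hswap h) (hadj.mp hab))
      · exact Or.inl (hm u₀ ▸ hr.trans (hswap h) (hadj.mp hab))
  have hdisj (v : V) (h₁ : G.Adj (m u₀) v) (h₂ : G.Adj (m (m u₀)) v) : False :=
    G.irrefl (hr.trans h₁ (hr.symm h₂))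
  refine ⟨fun v => decide (G.Adj (m u₀) v), fun u v => ?_⟩
  simp only [ne_eq, decide_eq_decide, hadj (a := u)]
  rcases hcover u with hu | hu
  · have h := hswap hu
    simp only [hu, true_iff]
    exact ⟨fun h' h₀ => hdisj v h₀ (hr.trans h h'),
      fun h' => hr.trans (hr.symm h) ((hcover v).resolve_left h')⟩
  · have h := hm u₀ ▸ hswap hu
    have hu' : ¬ G.Adj (m u₀) u := fun h₀ => hdisj u h₀ hu
    simp only [hu', false_iff, not_not]
    exact ⟨hr.trans h, hr.trans (hr.symm h)⟩

def Coloring.bipartiteDoubleIso (c : G.Coloring Bool) : bipartiteDouble G ≃g G ⊕g G where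
  toFun x := if c x.1 = x.2 then .inl x.1 else .inr x.1
  invFun := Sum.elim (fun v => (v, c v)) (fun v => (v, !c v))
  left_inv := by
    rintro ⟨v, s⟩
    cases hv : c v <;> cases s <;> simp [hv]
  right_inv := by rintro (v | v) <;> simp
  map_rel_iff' {x y} := by
    obtain ⟨u, s⟩ := x
    obtain ⟨v, t⟩ := y
    have hc : G.Adj u v → c u ≠ c v := c.valid
    cases s <;> cases t <;> cases hu : c u <;> cases hv : c v <;> simp_all [bipartiteDouble]

def isoCompleteBipartiteGraphOfAdjIff (c : V → Bool) (hc : ∀ u v, G.Adj u v ↔ c u ≠ c v) :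
    G ≃g completeBipartiteGraph {v // c v} {v // ¬ c v} where
  toEquiv := (Equiv.sumCompl fun v => c v).symm
  map_rel_iff' {u v} := by
    rw [hc]
    cases hu : c u <;> cases hv : c v <;> simp [hu, hv]

end SimpleGraph

section MatchingGainMatrix

variable [DecidableEq V] {G : SimpleGraph V} {φ : V → V → ℂ} {m : V → V}

noncomputable def matchingGainMatrix (φ : V → V → ℂ) (m : V → V) : Matrix V V ℂ :=
  Matrix.of fun u v => if v = m u then φ u v else 0

theorem matchingGainMatrix_isHermitian (hg : IsGain G φ) (hm : Function.Involutive m)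
    (hadj : ∀ v, G.Adj v (m v)) : (matchingGainMatrix φ m).IsHermitian := by
  ext u v
  simp only [conjTranspose_apply, matchingGainMatrix, of_apply]
  by_cases h : v = m u
  · subst h
    rw [if_pos (hm u).symm, if_pos rfl, hg.star_eq (hadj u).symm]
  · rw [if_neg fun h' => h (by rw [h', hm v]), if_neg h, star_zero]

variable [Fintype V]

theorem matchingGainMatrix_mul_apply (φ : V → V → ℂ) (m : V → V) (X : Matrix V V ℂ) (u w : V) :
    (matchingGainMatrix φ m * X) u w = φ u (m u) * X (m u) w := by
  simp [matchingGainMatrix, Matrix.mul_apply, ite_mul]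

theorem matchingGainMatrix_mem_unitaryGroup (hg : IsGain G φ) (hm : Function.Involutive m)
    (hadj : ∀ v, G.Adj v (m v)) : matchingGainMatrix φ m ∈ unitaryGroup V ℂ := by
  rw [mem_unitaryGroup_iff', star_eq_conjTranspose, matchingGainMatrix_isHermitian hg hm hadj]
  ext u w
  rw [matchingGainMatrix_mul_apply]
  simp only [matchingGainMatrix, of_apply, hm u, one_apply, eq_comm (a := u)]
  split_ifs with h
  · rw [h]
    exact hg.mul_eq_one (hadj u)
  · exact mul_zero _

theorem trace_gainAdj_mul_matchingGainMatrix (hg : IsGain G φ) (hadj : ∀ v, G.Adj v (m v)) :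
    (gainAdj G φ * matchingGainMatrix φ m).trace = Fintype.card V := by
  rw [trace_mul_comm, trace]
  simp only [diag_apply, matchingGainMatrix_mul_apply, gainAdj, if_pos (hadj _).symm,
    hg.mul_eq_one (hadj _)]
  simp

theorem equivalence_of_posSemidef_matchingGainMatrix_mul (hg : IsGain G φ)
    (hadj : ∀ v, G.Adj v (m v)) (hC : (matchingGainMatrix φ m * gainAdj G φ).PosSemidef) :
    Equivalence fun u v => G.Adj (m u) v := by
  have hC_apply := matchingGainMatrix_mul_apply φ m (gainAdj G φ)
  have hne (u v : V) : (matchingGainMatrix φ m * gainAdj G φ) u v ≠ 0 ↔ G.Adj (m u) v := by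
    rw [hC_apply, mul_ne_zero_iff]
    by_cases h : G.Adj (m u) v
    · simp [gainAdj, h, hg.ne_zero (hadj u), hg.ne_zero h]
    · simp [gainAdj, h]
  have hdiag (u : V) : (matchingGainMatrix φ m * gainAdj G φ) u u = 1 := by
    rw [hC_apply, gainAdj, if_pos (hadj u).symm, hg.mul_eq_one (hadj u)]
  have hnorm (u v : V) (h : (matchingGainMatrix φ m * gainAdj G φ) u v ≠ 0) :
      ‖(matchingGainMatrix φ m * gainAdj G φ) u v‖ = 1 := by
    have hv := (hne u v).mp h
    rw [hC_apply, norm_mul, gainAdj, if_pos hv, hg.unit _ _ (hadj u), hg.unit _ _ hv, one_mul]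
  simpa only [hne] using hC.equivalence_ne_zero hdiag hnorm

end MatchingGainMatrix

/-- if `G` is connected, has a perfect matching, and the energy of `Φ` equals
`2μ(G)`, then the bipartite double `G ⊗ K₂` is disconnected; it consists of exactly two
connected components, both isomorphic to `G` (i.e. `G ⊗ K₂ ≃g G ⊕g G`), and `G` is a
complete bipartite graph. -/
theorem bipartiteDouble_disconnected_of_gainEnergy_eq [Fintype V] [DecidableEq V]
    (G : SimpleGraph V) (φ : V → V → ℂ) (hg : IsGain G φ)
    (hconn : G.Connected)
    (hpm : ∃ M : Finset (Sym2 V), IsGraphMatching G M ∧ ∀ v : V, ∃ e ∈ M, v ∈ e)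
    (hE : gainEnergy G φ hg = 2 * (matchingNumber G : ℝ)) :
    ¬ (bipartiteDouble G).Connected ∧
      Nonempty (bipartiteDouble G ≃g (G ⊕g G)) ∧
      ∃ n m : ℕ, Nonempty (G ≃g completeBipartiteGraph (Fin n) (Fin m)) := by
  obtain ⟨M, hM, hcov⟩ := hpm
  obtain ⟨m, hm, hadj⟩ := hM.exists_involutive hcov
  have hEn : ∑ i, |hg.isHermitian.eigenvalues i| = Fintype.card V := by
    change gainEnergy G φ hg = _
    rw [hE, hM.matchingNumber_eq hcov]
    exact_mod_cast hM.two_mul_card_eq hcov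
  have hC : (matchingGainMatrix φ m * gainAdj G φ).PosSemidef := by
    refine hg.isHermitian.posSemidef_mul_of_trace_mul_eq
      (matchingGainMatrix_mem_unitaryGroup hg hm hadj) ?_
    rw [trace_gainAdj_mul_matchingGainMatrix hg hadj, ← Complex.ofReal_natCast, ← hEn]
    simp
  obtain ⟨c, hc⟩ := hconn.exists_adj_iff_ne hm
    (equivalence_of_posSemidef_matchingGainMatrix_mul hg hadj hC)
  have := hconn.nonempty
  let e := (SimpleGraph.Coloring.mk c fun h => (hc _ _).mp h).bipartiteDoubleIso
  exact ⟨fun h => SimpleGraph.not_connected_sum (e.connected_iff.mp h), ⟨e⟩, _, _,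
    ⟨(SimpleGraph.isoCompleteBipartiteGraphOfAdjIff c hc).trans
      (SimpleGraph.completeBipartiteGraphCongr (Fintype.equivFin _) (Fintype.equivFin _))⟩⟩
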